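/- arXiv:1608.00760 — 3 statements merged into one kernel-verified Lean document; each statement's English description precedes it below -/
import Mathlib

section
/- Let u > 0 and A ∈ ℝ with cos(2A) < 1 and 1 + cos(2A) > 0, and define p(x) = x² - u·x + u·cos(2A) - 1. Then p has exactly one root in the open interval (-1, cos(2A)) and its other root is strictly greater than 1. -/
/-!
With `c = cos (2A)` we have `p(c) = c² - 1 < 0`, `p(1) = u (c - 1) < 0` and `p(-1) = u (1 + c) > 0`.
A monic quadratic that is negative somewhere has two real roots `r < s`, and it is negative exactly
between them; so `c` and `1` lie in `(r, s)` while `-1 < c` lies below `r`, i.e. `-1 < r < c` and `1 < s`.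
-/

open Real

theorem exists_factor_of_quadratic_neg {b k m : ℝ} (h : m ^ 2 + b * m + k < 0) :
    ∃ r s : ℝ, r < m ∧ m < s ∧ ∀ z : ℝ, z ^ 2 + b * z + k = (z - r) * (z - s) := by
  set d := √(b ^ 2 - 4 * k)
  have hd : d ^ 2 = b ^ 2 - 4 * k := sq_sqrt (by nlinarith [sq_nonneg (2 * m + b)])
  -- `(2m + b)² = 4 p(m) + (b² - 4k) < d²`, so `|2m + b| < d`.
  have hlt : |2 * m + b| < d := abs_lt_of_sq_lt_sq (by nlinarith) (sqrt_nonneg _)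
  obtain ⟨hlo, hhi⟩ := abs_lt.mp hlt
  refine ⟨(-b - d) / 2, (-b + d) / 2, by linarith, by linarith, fun z => ?_⟩
  linear_combination (1 / 4 : ℝ) * hd

/-- For `u > 0` and `A` with `cos(2A) < 1` and `1 + cos(2A) > 0`, the quadratic
`p(x) = x² - ux + u cos(2A) - 1` has exactly one root in `(-1, cos(2A))`, and its
other root is `> 1`. -/
theorem stmt_8 (u A : ℝ) (hu : 0 < u) (h1 : Real.cos (2 * A) < 1)
    (h2 : 1 + Real.cos (2 * A) > 0) :
    ∃ x y : ℝ, x ∈ Set.Ioo (-1 : ℝ) (Real.cos (2 * A)) ∧ 1 < y ∧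
      (∀ z : ℝ, z ^ 2 - u * z + u * Real.cos (2 * A) - 1 = 0 ↔ z = x ∨ z = y) := by
  set c := Real.cos (2 * A)
  have hp : ∀ z : ℝ, z ^ 2 - u * z + u * c - 1 = z ^ 2 + -u * z + (u * c - 1) := fun z => by ring
  obtain ⟨r, s, hrc, hcs, hfac⟩ :=
    exists_factor_of_quadratic_neg (b := -u) (k := u * c - 1) (m := c) (by nlinarith)
  have hr : -1 < r := by
    have hpos : 0 < (-1 - r) * (-1 - s) := by rw [← hfac, ← hp]; nlinarith
    linarith [neg_of_mul_pos_left hpos (by linarith)]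
  have hs : 1 < s := by
    have hneg : (1 - r) * (1 - s) < 0 := by rw [← hfac, ← hp]; nlinarith
    linarith [neg_of_mul_neg_right hneg (by linarith)]
  refine ⟨r, s, ⟨hr, hrc⟩, hs, fun z => ?_⟩
  rw [hp, hfac, mul_eq_zero, sub_eq_zero, sub_eq_zero]
end

section
/- Let λ₁, λ₂ be the roots of P(λ) = λ² - (α+β)λ + (αβ-γ) with αβ - γ ≠ 0, and set ρ₁ = |α+β|, ρ₂ = |αβ-γ|, θ₁ = Arg(α+β), θ₂ = Arg(αβ-γ), A = θ₁ - θ₂/2, B = (1/2)·arccos((1/2)(ρ₁²/(2ρ₂) - sqrt(ρ₁⁴/(4ρ₂²) + 4 - 2(ρ₁²/ρ₂)cos(2A)))). If cos(A) ≥ 0, then the principal arguments of λ₁, λ₂ are θ₂/2 + B and θ₂/2 - B. -/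
open Complex Real

/-!
Rotating both roots by `exp (-i θ₂ / 2)` turns their product into the positive real `ρ₂`, so the
rotated roots are `z` and `ρ₂ / z`, with arguments `φ` and `-φ`, and their sum is
`ρ₁ exp (i A)`. Since `Re z` and `Re (ρ₂ / z)` have the same sign, `cos A ≥ 0` forces `Re z ≥ 0`,
i.e. `|φ| ≤ π / 2`. Writing `z = a + b i`, the argument of the arccos is a rational function of
`a` and `b` which equals `cos 2φ = (a² - b²) / (a² + b²)`, hence `B = |φ|`.
-/

theorem add_eq_and_mul_eq_of_forall_eq {R : Type*} [CommRing R] {s p x y : R}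
    (h : ∀ z, z ^ 2 - s * z + p = (z - x) * (z - y)) : x + y = s ∧ x * y = p :=
  ⟨by linear_combination h 1 - h 0, by linear_combination -h 0⟩

theorem Complex.arg_mul_exp_mul_I {z : ℂ} (hz : z ≠ 0) {x : ℝ}
    (h : arg z + x ∈ Set.Ioc (-π) π) : arg (z * exp (x * I)) = arg z + x := by
  conv_lhs => rw [← norm_mul_exp_arg_mul_I z]
  rw [mul_assoc, ← exp_add, ← add_mul, ← ofReal_add, exp_mul_I]
  exact arg_mul_cos_add_sin_mul_I (norm_pos_iff.2 hz) h

theorem Complex.cos_two_mul_arg {z : ℂ} (hz : z ≠ 0) :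
    Real.cos (2 * arg z) = (z.re ^ 2 - z.im ^ 2) / (z.re ^ 2 + z.im ^ 2) := by
  have hn : ‖z‖ ^ 2 = z.re ^ 2 + z.im ^ 2 := by rw [Complex.sq_norm, normSq_apply]; ring
  have hn0 : z.re ^ 2 + z.im ^ 2 ≠ 0 := hn ▸ pow_ne_zero 2 (norm_ne_zero_iff.2 hz)
  rw [Real.cos_two_mul, cos_arg hz, div_pow, hn]
  field_simp
  ring

/-- The quantity `cos 2B` of the statement, for `ρ = ρ₁` and `r = ρ₂`. -/
noncomputable def cosRootAngle (ρ r A : ℝ) : ℝ :=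
  (1 / 2) * (ρ ^ 2 / (2 * r) - √(ρ ^ 4 / (4 * r ^ 2) + 4 - 2 * (ρ ^ 2 / r) * Real.cos (2 * A)))

/-- Here `a + b i` and `t (a - b i)` are the rotated roots and `ρ exp (i A)` is their sum. -/
theorem cosRootAngle_eq {a b t r ρ A : ℝ} (ht : 0 < t) (hn : 0 < a ^ 2 + b ^ 2)
    (hr : r = t * (a ^ 2 + b ^ 2)) (hc : ρ * Real.cos A = (1 + t) * a)
    (hs : ρ * Real.sin A = (1 - t) * b) :
    cosRootAngle ρ r A = (a ^ 2 - b ^ 2) / (a ^ 2 + b ^ 2) := by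
  have hr0 : 0 < r := hr ▸ mul_pos ht hn
  have hsq : ρ ^ 2 = (1 + t) ^ 2 * a ^ 2 + (1 - t) ^ 2 * b ^ 2 := by
    linear_combination (ρ * Real.cos A + (1 + t) * a) * hc + (ρ * Real.sin A + (1 - t) * b) * hs
      - ρ ^ 2 * Real.sin_sq_add_cos_sq A
  have hcos2 : ρ ^ 2 * Real.cos (2 * A) = (1 + t) ^ 2 * a ^ 2 - (1 - t) ^ 2 * b ^ 2 := by
    rw [Real.cos_two_mul]
    linear_combination 2 * (ρ * Real.cos A + (1 + t) * a) * hc - hsq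
  -- the radicand is `|(a + b i) - t (a - b i)| ^ 4 / (4 r ^ 2)`
  have hD : ρ ^ 4 / (4 * r ^ 2) + 4 - 2 * (ρ ^ 2 / r) * Real.cos (2 * A)
      = (((1 - t) ^ 2 * a ^ 2 + (1 + t) ^ 2 * b ^ 2) / (2 * r)) ^ 2 := by
    rw [div_pow, eq_div_iff (by positivity)]
    field_simp
    linear_combination 4 * ((ρ ^ 2 + (1 + t) ^ 2 * a ^ 2 + (1 - t) ^ 2 * b ^ 2) * hsq
      - 8 * r * hcos2 + (16 * (r + t * (a ^ 2 + b ^ 2))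
        - 8 * ((1 + t) ^ 2 * a ^ 2 - (1 - t) ^ 2 * b ^ 2)) * hr)
  rw [cosRootAngle, hD, sqrt_sq (by positivity), hr]
  field_simp
  linear_combination hsq

theorem div_exp_mul_div_exp_eq_norm (x y : ℂ) :
    x / exp (↑(arg (x * y) / 2) * I) * (y / exp (↑(arg (x * y) / 2) * I)) = ‖x * y‖ := by
  rw [div_mul_div_comm, ← sq, ← Complex.exp_nat_mul, div_eq_iff (Complex.exp_ne_zero _)]
  conv_lhs => rw [← norm_mul_exp_arg_mul_I (x * y)]
  push_cast
  ring_nf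

theorem add_div_exp_eq (x y : ℂ) (θ : ℝ) :
    x / exp (θ * I) + y / exp (θ * I) = ‖x + y‖ * exp (↑(arg (x + y) - θ) * I) := by
  rw [← add_div, div_eq_iff (Complex.exp_ne_zero _), mul_assoc, ← Complex.exp_add]
  conv_lhs => rw [← norm_mul_exp_arg_mul_I (x + y)]
  push_cast
  ring_nf

theorem arg_eq_half_add_arg_div_exp {z : ℂ} (hz : z ≠ 0) {θ : ℝ} (hθ : θ ∈ Set.Ioc (-π) π)
    (h : |arg (z / exp (↑(θ / 2) * I))| ≤ π / 2) :
    arg z = θ / 2 + arg (z / exp (↑(θ / 2) * I)) := by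
  have hu := Complex.exp_ne_zero (↑(θ / 2) * I)
  rw [add_comm, ← arg_mul_exp_mul_I (div_ne_zero hz hu), div_mul_cancel₀ z hu]
  constructor <;> linarith [abs_le.1 h, hθ.1, hθ.2]

section RotatedRoots

variable {z w : ℂ} {r ρ A : ℝ}

theorem ne_zero_of_mul_eq_ofReal (hr : 0 < r) (h : z * w = r) : z ≠ 0 :=
  left_ne_zero_of_mul (h ▸ ofReal_ne_zero.2 hr.ne')

theorem eq_ofReal_div_of_mul_eq (hr : 0 < r) (h : z * w = r) : w = r / z :=
  eq_div_of_mul_eq (ne_zero_of_mul_eq_ofReal hr h) (by rw [mul_comm, h])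

theorem arg_eq_neg_of_mul_eq_ofReal (hr : 0 < r) (h : z * w = r) (hz : arg z ≠ π) :
    arg w = -arg z := by
  rw [eq_ofReal_div_of_mul_eq hr h, div_eq_mul_inv, arg_real_mul _ hr, arg_inv, if_neg hz]

theorem re_im_of_mul_eq_of_add_eq (hr : 0 < r) (hprod : z * w = r)
    (hsum : z + w = ρ * exp (A * I)) :
    ρ * Real.cos A = (1 + r / normSq z) * z.re ∧
      ρ * Real.sin A = (1 - r / normSq z) * z.im := by
  rw [eq_ofReal_div_of_mul_eq hr hprod] at hsum
  constructor
  · have := congrArg re hsum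
    simp only [add_re, div_re, ofReal_re, ofReal_im, zero_mul, zero_div, add_zero, mul_re,
      exp_ofReal_mul_I_re, exp_ofReal_mul_I_im, sub_zero] at this
    linear_combination -this
  · have := congrArg im hsum
    simp only [add_im, div_im, ofReal_im, zero_mul, zero_div, ofReal_re, zero_sub, mul_im,
      exp_ofReal_mul_I_im, exp_ofReal_mul_I_re, add_zero] at this
    linear_combination -this

theorem re_nonneg_of_mul_eq_of_add_eq (hr : 0 < r) (hprod : z * w = r)
    (hsum : z + w = ρ * exp (A * I)) (hρ : 0 ≤ ρ) (hA : 0 ≤ Real.cos A) : 0 ≤ z.re := by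
  obtain ⟨hc, -⟩ := re_im_of_mul_eq_of_add_eq hr hprod hsum
  have ht : 0 < 1 + r / normSq z :=
    add_pos_of_pos_of_nonneg one_pos (div_nonneg hr.le (normSq_nonneg z))
  exact (mul_nonneg_iff_of_pos_left ht).1 (hc ▸ mul_nonneg hρ hA)

theorem half_arccos_cosRootAngle (hr : 0 < r) (hprod : z * w = r)
    (hsum : z + w = ρ * exp (A * I)) (habs : |arg z| ≤ π / 2) :
    (1 / 2) * Real.arccos (cosRootAngle ρ r A) = |arg z| := by
  have hz := ne_zero_of_mul_eq_ofReal hr hprod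
  have hn : z.re ^ 2 + z.im ^ 2 = normSq z := by rw [normSq_apply]; ring
  have hn0 : 0 < normSq z := normSq_pos.2 hz
  obtain ⟨hc, hs⟩ := re_im_of_mul_eq_of_add_eq hr hprod hsum
  rw [cosRootAngle_eq (by positivity) (hn ▸ hn0) (by rw [hn]; field_simp) hc hs,
    ← cos_two_mul_arg hz, ← Real.cos_abs, abs_mul, abs_two,
    Real.arccos_cos (by positivity) (by linarith)]
  ring

end RotatedRoots

/-- Lemma 1(a): with `λ₁, λ₂` the roots of `λ² - (α+β)λ + (αβ-γ)`, `αβ-γ ≠ 0`,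
`ρ₁ = |α+β|`, `ρ₂ = |αβ-γ|`, `θ₁ = Arg(α+β)`, `θ₂ = Arg(αβ-γ)`, `A = θ₁ - θ₂/2`,
`B = (1/2) arccos((1/2)(ρ₁²/(2ρ₂) - √(ρ₁⁴/(4ρ₂²) + 4 - 2(ρ₁²/ρ₂)cos 2A)))`,
if `cos A ≥ 0` then the principal arguments of `λ₁, λ₂` are `θ₂/2 + B` and
`θ₂/2 - B`. -/
theorem stmt_11 (α β γ lam₁ lam₂ : ℂ) (hne : α * β - γ ≠ 0)
    (hroots : ∀ lam : ℂ, lam ^ 2 - (α + β) * lam + (α * β - γ)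
      = (lam - lam₁) * (lam - lam₂))
    (ρ₁ ρ₂ θ₁ θ₂ A B : ℝ)
    (hρ₁ : ρ₁ = ‖α + β‖) (hρ₂ : ρ₂ = ‖α * β - γ‖)
    (hθ₁ : θ₁ = (α + β).arg) (hθ₂ : θ₂ = (α * β - γ).arg)
    (hA : A = θ₁ - θ₂ / 2)
    (hB : B = (1 / 2) * Real.arccos ((1 / 2) * (ρ₁ ^ 2 / (2 * ρ₂) -
      Real.sqrt (ρ₁ ^ 4 / (4 * ρ₂ ^ 2) + 4 - 2 * (ρ₁ ^ 2 / ρ₂) * Real.cos (2 * A)))))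
    (hcos : Real.cos A ≥ 0) :
    (lam₁.arg = θ₂ / 2 + B ∧ lam₂.arg = θ₂ / 2 - B) ∨
    (lam₁.arg = θ₂ / 2 - B ∧ lam₂.arg = θ₂ / 2 + B) := by
  obtain ⟨hsum, hprod⟩ := add_eq_and_mul_eq_of_forall_eq hroots
  subst hρ₁ hρ₂ hθ₁ hθ₂ hA
  set u := exp (↑(arg (α * β - γ) / 2) * I)
  have hr : 0 < ‖α * β - γ‖ := norm_pos_iff.2 hne
  have hprod' : lam₁ / u * (lam₂ / u) = ‖α * β - γ‖ := by
    simpa only [hprod] using div_exp_mul_div_exp_eq_norm lam₁ lam₂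
  have hsum' :
      lam₁ / u + lam₂ / u = ‖α + β‖ * exp (↑(arg (α + β) - arg (α * β - γ) / 2) * I) := by
    simpa only [hsum] using add_div_exp_eq lam₁ lam₂ (arg (α * β - γ) / 2)
  set φ := arg (lam₁ / u)
  have hφ : |φ| ≤ π / 2 := abs_arg_le_pi_div_two_iff.2 <|
    re_nonneg_of_mul_eq_of_add_eq hr hprod' hsum' (norm_nonneg _) hcos
  have hφ₂ : arg (lam₂ / u) = -φ :=
    arg_eq_neg_of_mul_eq_ofReal hr hprod' (by linarith [pi_pos, (abs_le.1 hφ).2])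
  have hl : lam₁ * lam₂ ≠ 0 := hprod ▸ hne
  have h₁ : arg lam₁ = arg (α * β - γ) / 2 + φ :=
    arg_eq_half_add_arg_div_exp (left_ne_zero_of_mul hl) ⟨neg_pi_lt_arg _, arg_le_pi _⟩ hφ
  have h₂ : arg lam₂ = arg (α * β - γ) / 2 + -φ := hφ₂ ▸
    arg_eq_half_add_arg_div_exp (right_ne_zero_of_mul hl) ⟨neg_pi_lt_arg _, arg_le_pi _⟩
      (by rwa [hφ₂, abs_neg])
  rw [h₁, h₂, hB, ← cosRootAngle, half_arccos_cosRootAngle hr hprod' hsum' hφ]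
  rcases abs_cases φ with ⟨h, -⟩ | ⟨h, -⟩ <;> rw [h]
  · exact Or.inl ⟨rfl, by ring⟩
  · exact Or.inr ⟨by ring, by ring⟩
end

section
/- Under the notation of Lemma 1 (λ₁, λ₂ roots of λ² - (α+β)λ + (αβ-γ), ρ₁, ρ₂, θ₁, θ₂, A = θ₁ - θ₂/2, B as defined), if cos(A) < 0 and θ₂ ∈ (-2B, 2B], then the principal arguments of λ₁, λ₂ are θ₂/2 + (π - B) and θ₂/2 - (π - B). -/
open Complex Real

/-!
Let `w` be the square root of `αβ - γ` with `arg w = θ₂ / 2`. Then `z = λ₁ / w` satisfies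
`λ₂ = z⁻¹ w` and `z + z⁻¹ = (α + β) / w`, whose real part is `(ρ₁ / √ρ₂) cos A`.
Writing `z = r e^{iψ}`, the Joukowski map gives `z + z⁻¹ = (r + r⁻¹) cos ψ + i (r - r⁻¹) sin ψ`;
eliminating `r` leaves `4c⁴ - (‖z + z⁻¹‖² + 4) c² + (Re (z + z⁻¹))² = 0` for `c = cos ψ`, and
`r + r⁻¹ ≥ 2` selects the smaller root, so `cos 2ψ = 2c² - 1` is exactly the argument of `arccos`
in `B`. Since `cos A < 0` forces `cos ψ ≤ 0`, this gives `|ψ| = π - B`, and the condition on `θ₂`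
keeps `θ₂ / 2 ± ψ` in `(-π, π]`.
-/

theorem vieta_of_forall_eq {R : Type*} [CommRing R] {s p a b : R}
    (h : ∀ x : R, x ^ 2 - s * x + p = (x - a) * (x - b)) : a + b = s ∧ a * b = p := by
  have h0 := h 0
  have h1 := h 1
  constructor
  · linear_combination h1 - h0
  · linear_combination -h0

theorem exists_eq_mul_and_eq_inv_mul {K : Type*} [Field K] {s w a b : K} (hw : w ≠ 0)
    (hsum : a + b = s) (hprod : a * b = w ^ 2) :
    ∃ z : K, z ≠ 0 ∧ a = z * w ∧ b = z⁻¹ * w ∧ z + z⁻¹ = s / w := by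
  have ha : a ≠ 0 := left_ne_zero_of_mul (hprod ▸ pow_ne_zero 2 hw)
  have hinv : (a / w)⁻¹ = b / w := by
    rw [inv_div, div_eq_div_iff ha hw]
    linear_combination -hprod
  refine ⟨a / w, div_ne_zero ha hw, (div_mul_cancel₀ _ hw).symm, ?_, ?_⟩
  · rw [hinv, div_mul_cancel₀ _ hw]
  · rw [hinv, ← hsum, add_div]

theorem Real.arccos_cos_two_mul_of_cos_nonpos {ψ : ℝ} (hψ : |ψ| ≤ π) (hcos : Real.cos ψ ≤ 0) :
    Real.arccos (Real.cos (2 * ψ)) = 2 * (π - |ψ|) := by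
  have hhalf : π / 2 ≤ |ψ| := by
    by_contra! h
    have := Real.cos_pos_of_mem_Ioo ⟨by linarith [abs_nonneg ψ, pi_pos], h⟩
    rw [Real.cos_abs] at this
    linarith
  have : Real.cos (2 * ψ) = Real.cos (2 * (π - |ψ|)) := by
    rw [mul_sub, Real.cos_two_pi_sub, ← abs_two, ← abs_mul, Real.cos_abs, abs_two]
  rw [this, Real.arccos_cos] <;> linarith

namespace Complex

theorem exists_sq_eq_and_arg_eq_half (p : ℂ) : ∃ w : ℂ, w ^ 2 = p ∧ arg w = arg p / 2 := by
  rcases eq_or_ne p 0 with rfl | hp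
  · exact ⟨0, by simp, by simp⟩
  refine ⟨p ^ (2⁻¹ : ℂ), cpow_ofNat_inv_pow p 2, ?_⟩
  have him : (log p * 2⁻¹).im = arg p / 2 := by simp [log_im, div_eq_mul_inv]
  rw [cpow_def_of_ne_zero hp, arg_exp, him, toIocMod_eq_self]
  constructor <;> linarith [neg_pi_lt_arg p, arg_le_pi p, pi_pos]

theorem re_div_eq_norm_div_mul_cos (x y : ℂ) :
    (x / y).re = ‖x‖ / ‖y‖ * Real.cos (arg x - arg y) := by
  rcases eq_or_ne x 0 with rfl | hx
  · simp
  rcases eq_or_ne y 0 with rfl | hy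
  · simp
  rw [div_re, Real.cos_sub, cos_arg hx, cos_arg hy, sin_arg, sin_arg, normSq_eq_norm_sq]
  have : ‖y‖ ≠ 0 := norm_ne_zero_iff.mpr hy
  field_simp

theorem re_add_inv (z : ℂ) : (z + z⁻¹).re = (‖z‖ + ‖z‖⁻¹) * Real.cos (arg z) := by
  rcases eq_or_ne z 0 with rfl | hz
  · simp
  rw [add_re, inv_re, cos_arg hz, normSq_eq_norm_sq]
  have : ‖z‖ ≠ 0 := norm_ne_zero_iff.mpr hz
  field_simp

theorem im_add_inv (z : ℂ) : (z + z⁻¹).im = (‖z‖ - ‖z‖⁻¹) * Real.sin (arg z) := by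
  rcases eq_or_ne z 0 with rfl | hz
  · simp
  rw [add_im, inv_im, sin_arg, normSq_eq_norm_sq]
  have : ‖z‖ ≠ 0 := norm_ne_zero_iff.mpr hz
  field_simp
  ring

theorem sq_norm_add_inv (z : ℂ) :
    ‖z + z⁻¹‖ ^ 2 = (‖z‖ + ‖z‖⁻¹) ^ 2 - 4 * Real.sin (arg z) ^ 2 := by
  rcases eq_or_ne z 0 with rfl | hz
  · simp
  have hr : ‖z‖ * ‖z‖⁻¹ = 1 := mul_inv_cancel₀ (norm_ne_zero_iff.mpr hz)
  rw [Complex.sq_norm, normSq_apply, re_add_inv, im_add_inv]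
  linear_combination (‖z‖ + ‖z‖⁻¹) ^ 2 * Real.sin_sq_add_cos_sq (arg z) -
    4 * Real.sin (arg z) ^ 2 * hr

theorem cos_two_mul_arg_s12 (z : ℂ) (hz : z ≠ 0) :
    Real.cos (2 * arg z) = (1 / 2) * (‖z + z⁻¹‖ ^ 2 / 2 -
      √((‖z + z⁻¹‖ ^ 2 / 2 + 2) ^ 2 - 4 * (z + z⁻¹).re ^ 2)) := by
  set R := ‖z‖ + ‖z‖⁻¹
  have hR : 4 ≤ R ^ 2 := by
    have hr : ‖z‖ * ‖z‖⁻¹ = 1 := mul_inv_cancel₀ (norm_ne_zero_iff.mpr hz)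
    nlinarith [sq_nonneg (‖z‖ - ‖z‖⁻¹)]
  have hc := Real.sin_sq_add_cos_sq (arg z)
  have hc1 := Real.cos_sq_le_one (arg z)
  have hD : (‖z + z⁻¹‖ ^ 2 / 2 + 2) ^ 2 - 4 * (z + z⁻¹).re ^ 2
      = ((R ^ 2 - 4 * Real.cos (arg z) ^ 2) / 2) ^ 2 := by
    rw [sq_norm_add_inv, re_add_inv]
    linear_combination
      (-(2 * R ^ 2 - 4 * Real.sin (arg z) ^ 2 + 4 + 4 * Real.cos (arg z) ^ 2)) * hc
  rw [hD, Real.sqrt_sq (by linarith), sq_norm_add_inv, Real.cos_two_mul]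
  linear_combination hc

theorem abs_arg_eq_pi_sub_half_arccos {z : ℂ} (hz : z ≠ 0) (hre : (z + z⁻¹).re ≤ 0) :
    |arg z| = π - (1 / 2) * Real.arccos ((1 / 2) * (‖z + z⁻¹‖ ^ 2 / 2 -
      √((‖z + z⁻¹‖ ^ 2 / 2 + 2) ^ 2 - 4 * (z + z⁻¹).re ^ 2))) := by
  have hcos : Real.cos (arg z) ≤ 0 := by
    rw [re_add_inv] at hre
    exact nonpos_of_mul_nonpos_right hre (by positivity)
  rw [← cos_two_mul_arg_s12 z hz, Real.arccos_cos_two_mul_of_cos_nonpos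
    (abs_le.2 ⟨(neg_pi_lt_arg z).le, arg_le_pi z⟩) hcos]
  ring

theorem arg_mul_and_arg_inv_mul_of_abs_arg_eq {z w : ℂ} (hz : z ≠ 0) (hw : w ≠ 0) {B : ℝ}
    (hB : 0 < B) (hzB : |arg z| = π - B) (hwB : arg w ∈ Set.Ioc (-B) B) :
    arg (z * w) = arg w + arg z ∧ arg (z⁻¹ * w) = arg w - arg z := by
  have hπ : arg z ≠ π := fun h ↦ by rw [h, abs_of_pos pi_pos] at hzB; linarith
  have hinv : arg z⁻¹ = -arg z := by rw [arg_inv, if_neg hπ]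
  have hBπ : B ≤ π := by linarith [abs_nonneg (arg z)]
  obtain ⟨hw₁, hw₂⟩ := hwB
  have hmem : arg z + arg w ∈ Set.Ioc (-π) π ∧ -arg z + arg w ∈ Set.Ioc (-π) π := by
    rcases (abs_eq (by linarith)).1 hzB with h | h <;> rw [h] <;>
      refine ⟨⟨?_, ?_⟩, ?_, ?_⟩ <;> linarith
  rw [arg_mul hz hw hmem.1, arg_mul (inv_ne_zero hz) hw (hinv ▸ hmem.2), hinv]
  constructor <;> ring

end Complex

/-- Lemma 1(b.2): with `λ₁, λ₂` the roots of `λ² - (α+β)λ + (αβ-γ)`, `αβ-γ ≠ 0`,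
`ρ₁ = |α+β|`, `ρ₂ = |αβ-γ|`, `θ₁ = Arg(α+β)`, `θ₂ = Arg(αβ-γ)`, `A = θ₁ - θ₂/2`,
`B = (1/2) arccos((1/2)(ρ₁²/(2ρ₂) - √(ρ₁⁴/(4ρ₂²) + 4 - 2(ρ₁²/ρ₂)cos 2A)))`,
if `cos A < 0` and `θ₂ ∈ (-2B, 2B]` then the principal arguments of `λ₁, λ₂` are
`θ₂/2 + (π-B)` and `θ₂/2 - (π-B)`. -/
theorem stmt_12 (α β γ lam₁ lam₂ : ℂ) (hne : α * β - γ ≠ 0)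
    (hroots : ∀ lam : ℂ, lam ^ 2 - (α + β) * lam + (α * β - γ)
      = (lam - lam₁) * (lam - lam₂))
    (ρ₁ ρ₂ θ₁ θ₂ A B : ℝ)
    (hρ₁ : ρ₁ = ‖α + β‖) (hρ₂ : ρ₂ = ‖α * β - γ‖)
    (hθ₁ : θ₁ = (α + β).arg) (hθ₂ : θ₂ = (α * β - γ).arg)
    (hA : A = θ₁ - θ₂ / 2)
    (hB : B = (1 / 2) * Real.arccos ((1 / 2) * (ρ₁ ^ 2 / (2 * ρ₂) -
      Real.sqrt (ρ₁ ^ 4 / (4 * ρ₂ ^ 2) + 4 - 2 * (ρ₁ ^ 2 / ρ₂) * Real.cos (2 * A)))))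
    (hcos : Real.cos A < 0) (hθ : θ₂ ∈ Set.Ioc (-(2 * B)) (2 * B)) :
    (lam₁.arg = θ₂ / 2 + (π - B) ∧ lam₂.arg = θ₂ / 2 - (π - B)) ∨
    (lam₁.arg = θ₂ / 2 - (π - B) ∧ lam₂.arg = θ₂ / 2 + (π - B)) := by
  obtain ⟨hsum, hprod⟩ := vieta_of_forall_eq hroots
  obtain ⟨w, hw2, hwarg⟩ := exists_sq_eq_and_arg_eq_half (α * β - γ)
  have hw : w ≠ 0 := by rintro rfl; exact hne (by simpa using hw2.symm)
  have hwn : ‖w‖ ^ 2 = ρ₂ := by rw [hρ₂, ← hw2, norm_pow]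
  obtain ⟨z, hz, rfl, rfl, hzsum⟩ := exists_eq_mul_and_eq_inv_mul hw hsum (hprod.trans hw2.symm)
  have hnorm : ‖z + z⁻¹‖ ^ 2 = ρ₁ ^ 2 / ρ₂ := by rw [hzsum, norm_div, div_pow, hwn, hρ₁]
  have hre : (z + z⁻¹).re = ρ₁ / ‖w‖ * Real.cos A := by
    rw [hzsum, re_div_eq_norm_div_mul_cos, hwarg, hρ₁, hA, hθ₁, hθ₂]
  have hre_nonpos : (z + z⁻¹).re ≤ 0 := by
    rw [hre, hρ₁]
    exact mul_nonpos_of_nonneg_of_nonpos (by positivity) hcos.le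
  have hzB : |arg z| = π - B := by
    rw [abs_arg_eq_pi_sub_half_arccos hz hre_nonpos, hB, hnorm, hre, mul_pow, div_pow, hwn,
      Real.cos_two_mul]
    ring_nf
  have hwB : arg w ∈ Set.Ioc (-B) B := by
    rw [hwarg, ← hθ₂]; constructor <;> linarith [hθ.1, hθ.2]
  obtain ⟨h₁, h₂⟩ :=
    arg_mul_and_arg_inv_mul_of_abs_arg_eq hz hw (by linarith [hθ.1, hθ.2]) hzB hwB
  rw [h₁, h₂, hwarg, ← hθ₂]
  rcases (abs_eq (by linarith [abs_nonneg (arg z)])).1 hzB with h | h <;> rw [h]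
  · left; constructor <;> ring
  · right; constructor <;> ring
end
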